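/- arXiv:2504.05266 — 5 statements merged into one kernel-verified Lean document; each statement's English description precedes it below -/
import Mathlib

section
/- Let A be an invertible real n×n matrix with singular values σ₁ ≥ … ≥ σ_n, and let 0 ≤ k ≤ n. For any k vectors v₁,…,v_k in ℝⁿ, the Gram determinant of the images satisfies (∏_{j=n−k+1}^{n} σ_j)² · det(Gram(v₁,…,v_k)) ≤ det(Gram(A v₁,…,A v_k)) ≤ (∏_{j=1}^{k} σ_j)² · det(Gram(v₁,…,v_k)), where Gram(w₁,…,w_k) is the k×k matrix of inner products ⟨w_i, w_j⟩. -/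
open Matrix Finset

/-- `σ : Fin m → ℝ` lists the singular values of the real `n × m` matrix `A`
in nonincreasing order: it is an antitone enumeration of the square roots of the
eigenvalues of `Aᵀ A`. -/
noncomputable def IsSingularValues {n m : ℕ} (A : Matrix (Fin n) (Fin m) ℝ)
    (σ : Fin m → ℝ) : Prop :=
  Antitone σ ∧ ∃ e : Fin m ≃ Fin m, ∀ i,
    σ i = Real.sqrt ((show (Aᵀ * A).IsHermitian by
      simpa using Matrix.isHermitian_conjTranspose_mul_self A).eigenvalues (e i))

/-- The Gram matrix of the vectors `v 0, …, v (k-1)` of `ℝⁿ`. -/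
def gramMatrix {n k : ℕ} (v : Fin k → (Fin n → ℝ)) : Matrix (Fin k) (Fin k) ℝ :=
  Matrix.of fun i j => v i ⬝ᵥ v j


open scoped Classical in
lemma sorted_factor {k n : ℕ} (g : Fin k → Fin n) (hg : StrictMono g)
    (π : Equiv.Perm (Fin k)) : Tuple.sort (g ∘ π) = π⁻¹ := by
  have hinj : Function.Injective (g ∘ π) := hg.injective.comp π.injective
  have hmono : StrictMono ((g ∘ π) ∘ Tuple.sort (g ∘ π)) :=
    (Tuple.monotone_sort (g ∘ π)).strictMono_of_injective
      (hinj.comp (Tuple.sort (g ∘ π)).injective)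
  have hcard : (Finset.image g univ).card = k := by
    rw [Finset.card_image_of_injective _ hg.injective, card_univ, Fintype.card_fin]
  have h1 : g = (Finset.image g univ).orderEmbOfFin hcard :=
    Finset.orderEmbOfFin_unique hcard (fun i => Finset.mem_image_of_mem g (mem_univ i)) hg
  have h2 : (g ∘ π) ∘ Tuple.sort (g ∘ π) = (Finset.image g univ).orderEmbOfFin hcard :=
    Finset.orderEmbOfFin_unique hcard
      (fun i => Finset.mem_image_of_mem g (mem_univ _)) hmono
  have h3 : (g ∘ π) ∘ Tuple.sort (g ∘ π) = g := by rw [h2, ← h1]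
  refine Equiv.ext fun x => ?_
  have h4 : g (π (Tuple.sort (g ∘ π) x)) = g x := congrFun h3 x
  have h5 := hg.injective h4
  have h6 := congrArg π.symm h5
  simpa using h6

open scoped Classical in
/-- Diagonal Cauchy–Binet. -/
lemma cauchyBinet_diag {k n : ℕ} (N : Matrix (Fin k) (Fin n) ℝ) (d : Fin n → ℝ) :
    (N * Matrix.diagonal d * Nᵀ).det =
      ∑ g ∈ univ.filter (fun g : Fin k → Fin n => StrictMono g),
        (∏ i, d (g i)) * (Matrix.det (Matrix.of fun a b => N b (g a))) ^ 2 := by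
  have expand : (N * Matrix.diagonal d * Nᵀ).det =
      ∑ f : Fin k → Fin n,
        (∏ i, (N i (f i) * d (f i))) * (Matrix.det (Matrix.of fun a b => N b (f a))) := by
    have hrows : (N * Matrix.diagonal d * Nᵀ) =
        Matrix.of (fun i => ∑ j : Fin n, (N i j * d j) • (fun i' => N i' j)) := by
      ext i i'
      rw [Matrix.mul_apply]
      simp only [Matrix.mul_diagonal, Matrix.transpose_apply, Matrix.of_apply,
        Finset.sum_apply, Pi.smul_apply, smul_eq_mul]
    rw [hrows]
    have : Matrix.det (Matrix.of (fun i => ∑ j : Fin n, (N i j * d j) • (fun i' => N i' j)))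
        = (Matrix.detRowAlternating : (Fin k → ℝ) [⋀^Fin k]→ₗ[ℝ] ℝ).toMultilinearMap
            (fun i => ∑ j : Fin n, (N i j * d j) • (fun i' => N i' j)) := rfl
    rw [this, MultilinearMap.map_sum]
    apply Finset.sum_congr rfl
    intro f _
    rw [MultilinearMap.map_smul_univ]
    rfl
  rw [expand]
  have hfil : ∑ f ∈ univ.filter (fun f : Fin k → Fin n => Function.Injective f),
        (∏ i, (N i (f i) * d (f i))) * (Matrix.det (Matrix.of fun a b => N b (f a)))
      = ∑ f : Fin k → Fin n,
        (∏ i, (N i (f i) * d (f i))) * (Matrix.det (Matrix.of fun a b => N b (f a))) := by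
    apply Finset.sum_filter_of_ne
    intro f _ hne
    by_contra hni
    obtain ⟨a, b, hab, hne'⟩ := Function.not_injective_iff.mp hni
    apply hne
    have hz : Matrix.det (Matrix.of fun a b => N b (f a)) = 0 := by
      apply Matrix.det_zero_of_row_eq hne'
      funext c
      simp [hab]
    rw [hz, mul_zero]
  rw [← hfil]
  have hbij : ∑ f ∈ univ.filter (fun f : Fin k → Fin n => Function.Injective f),
        (∏ i, (N i (f i) * d (f i))) * (Matrix.det (Matrix.of fun a b => N b (f a)))
      = ∑ p ∈ (univ.filter (fun g : Fin k → Fin n => StrictMono g)) ×ˢ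
          (univ : Finset (Equiv.Perm (Fin k))),
        (∏ i, (N i ((p.1 ∘ p.2) i) * d ((p.1 ∘ p.2) i))) *
          (Matrix.det (Matrix.of fun a b => N b ((p.1 ∘ p.2) a))) := by
    apply Finset.sum_nbij' (i := fun f => (f ∘ Tuple.sort f, (Tuple.sort f)⁻¹))
      (j := fun p => p.1 ∘ p.2)
    · intro f hf
      simp only [Finset.mem_filter, mem_univ, true_and] at hf ⊢
      rw [Finset.mem_product]
      refine ⟨?_, mem_univ _⟩
      simp only [Finset.mem_filter, mem_univ, true_and]
      exact (Tuple.monotone_sort f).strictMono_of_injective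
        (hf.comp (Tuple.sort f).injective)
    · intro p hp
      rw [Finset.mem_product] at hp
      obtain ⟨hp1, _⟩ := hp
      simp only [Finset.mem_filter, mem_univ, true_and] at hp1 ⊢
      exact hp1.injective.comp p.2.injective
    · intro f hf
      simp only [Finset.mem_filter, mem_univ, true_and] at hf
      funext x
      simp
    · intro p hp
      rw [Finset.mem_product] at hp
      obtain ⟨hp1, _⟩ := hp
      simp only [Finset.mem_filter, mem_univ, true_and] at hp1
      have hs := sorted_factor p.1 hp1 p.2
      ext x
      · simp [hs]
      · simp [hs]
    · intro f _
      simp [Function.comp, Equiv.apply_symm_apply]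
  rw [hbij, Finset.sum_product]
  apply Finset.sum_congr rfl
  intro g hg
  simp only [Finset.mem_filter, mem_univ, true_and] at hg
  -- inner sum over permutations
  have key : ∀ π : Equiv.Perm (Fin k),
      (∏ i, (N i (g (π i)) * d (g (π i)))) *
        (Matrix.det (Matrix.of fun a b => N b (g (π a))))
      = (∏ i, d (g i)) * ((Equiv.Perm.sign π : ℤ) : ℝ) * (∏ i, N i (g (π i))) *
          (Matrix.det (Matrix.of fun a b => N b (g a))) := by
    intro π
    have hperm : (Matrix.of fun a b => N b (g (π a)))
        = (Matrix.of fun a b => N b (g a)).submatrix π id := by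
      ext a b; simp
    rw [Finset.prod_mul_distrib, hperm, Matrix.det_permute]
    have : ∏ i, d (g (π i)) = ∏ i, d (g i) := Equiv.prod_comp π (fun i => d (g i))
    rw [this]
    ring
  calc ∑ π : Equiv.Perm (Fin k),
        (∏ i, (N i ((g ∘ π) i) * d ((g ∘ π) i))) *
          (Matrix.det (Matrix.of fun a b => N b ((g ∘ π) a)))
      = ∑ π : Equiv.Perm (Fin k),
        (∏ i, d (g i)) * ((Equiv.Perm.sign π : ℤ) : ℝ) * (∏ i, N i (g (π i))) *
          (Matrix.det (Matrix.of fun a b => N b (g a))) := by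
        apply Finset.sum_congr rfl; intro π _; exact key π
    _ = (∏ i, d (g i)) *
          (∑ π : Equiv.Perm (Fin k), ((Equiv.Perm.sign π : ℤ) : ℝ) * ∏ i, N i (g (π i))) *
          (Matrix.det (Matrix.of fun a b => N b (g a))) := by
        rw [Finset.mul_sum, Finset.sum_mul]
        apply Finset.sum_congr rfl; intro π _; ring
    _ = (∏ i, d (g i)) * (Matrix.det (Matrix.of fun a b => N b (g a))) ^ 2 := by
        have : (∑ π : Equiv.Perm (Fin k), ((Equiv.Perm.sign π : ℤ) : ℝ) * ∏ i, N i (g (π i)))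
            = Matrix.det (Matrix.of fun a b => N b (g a)) := by
          rw [Matrix.det_apply']
          apply Finset.sum_congr rfl
          intro π _
          rfl
        rw [this]; ring

lemma strictMono_val_le {k n : ℕ} {g : Fin k → Fin n} (hg : StrictMono g) :
    ∀ m (hm : m < k), m ≤ (g ⟨m, hm⟩ : ℕ) := by
  intro m
  induction m with
  | zero => intro _; exact Nat.zero_le _
  | succ m ih =>
    intro hm
    have h1 := ih (Nat.lt_of_succ_lt hm)
    have h2 : g ⟨m, Nat.lt_of_succ_lt hm⟩ < g ⟨m + 1, hm⟩ :=
      hg (Fin.mk_lt_mk.mpr (Nat.lt_succ_self m))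
    rw [Fin.lt_def] at h2
    omega

lemma strictMono_val_le' {k n : ℕ} {g : Fin k → Fin n} (hg : StrictMono g) (i : Fin k) :
    (i : ℕ) ≤ (g i : ℕ) := strictMono_val_le hg i.1 i.2

lemma strictMono_val_ge {k n : ℕ} (hk : k ≤ n) {g : Fin k → Fin n} (hg : StrictMono g)
    (i : Fin k) : (g i : ℕ) ≤ n - k + i := by
  have hrev : StrictMono (fun j : Fin k => (g j.rev).rev) := by
    intro a b hab
    have h1 : g b.rev < g a.rev := hg (by rwa [Fin.rev_lt_rev])
    rwa [Fin.rev_lt_rev]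
  have h := strictMono_val_le' hrev i.rev
  simp only [Fin.rev_rev] at h
  rw [Fin.val_rev] at h
  rw [Fin.val_rev] at h
  have h2 := i.2
  have h3 := (g i).2
  omega

lemma prod_bounds {k n : ℕ} (hk : k ≤ n) (τ : Fin n → ℝ) (hτ : Antitone τ)
    (h0 : ∀ j, 0 ≤ τ j) {g : Fin k → Fin n} (hg : StrictMono g) :
    (∏ j ∈ univ.filter (fun j : Fin n => n - k ≤ (j : ℕ)), τ j) ≤ (∏ i, τ (g i)) ∧
      (∏ i, τ (g i)) ≤ ∏ j ∈ univ.filter (fun j : Fin n => (j : ℕ) < k), τ j := by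
  have htop : ∏ j ∈ univ.filter (fun j : Fin n => (j : ℕ) < k), τ j
      = ∏ i : Fin k, τ (Fin.castLE hk i) := by
    refine (Finset.prod_bij (fun (i : Fin k) _ => Fin.castLE hk i) ?_ ?_ ?_ ?_).symm
    · intro a _
      simp only [Finset.mem_filter, mem_univ, true_and]
      exact a.2
    · intro a _ b _ hab
      exact Fin.castLE_injective hk hab
    · intro b hb
      simp only [Finset.mem_filter, mem_univ, true_and] at hb
      exact ⟨⟨(b : ℕ), hb⟩, mem_univ _, by apply Fin.ext; simp⟩
    · intro a _; rfl
  have hbot : ∏ j ∈ univ.filter (fun j : Fin n => n - k ≤ (j : ℕ)), τ j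
      = ∏ i : Fin k, τ ⟨n - k + (i : ℕ), by have := i.2; omega⟩ := by
    refine (Finset.prod_bij
      (fun (i : Fin k) _ => (⟨n - k + (i : ℕ), by have := i.2; omega⟩ : Fin n)) ?_ ?_ ?_ ?_).symm
    · intro a _
      simp only [Finset.mem_filter, mem_univ, true_and]
      omega
    · intro a _ b _ hab
      apply Fin.ext
      have := Fin.mk.injEq .. ▸ hab
      simp only [Fin.mk.injEq] at hab
      omega
    · intro b hb
      simp only [Finset.mem_filter, mem_univ, true_and] at hb
      have hb2 := b.2
      refine ⟨⟨(b : ℕ) - (n - k), by omega⟩, mem_univ _, ?_⟩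
      apply Fin.ext
      simp only
      omega
    · intro a _; rfl
  constructor
  · rw [hbot]
    apply Finset.prod_le_prod (fun i _ => h0 _)
    intro i _
    apply hτ
    rw [Fin.le_def]
    simp only
    exact strictMono_val_ge hk hg i
  · rw [htop]
    apply Finset.prod_le_prod (fun i _ => h0 _)
    intro i _
    apply hτ
    rw [Fin.le_def]
    exact strictMono_val_le' hg i

/-- Two-sided bound of the Gram determinant of the images `A v₁, …, A v_k`
in terms of the Gram determinant of `v₁, …, v_k` via the products of the
`k` smallest, resp. `k` largest, singular values of the invertible matrix `A`. -/
theorem gram_det_image_bounds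
    {n k : ℕ} (hk : k ≤ n)
    (A : Matrix (Fin n) (Fin n) ℝ) (hA : IsUnit A.det)
    (σ : Fin n → ℝ) (hσ : IsSingularValues A σ)
    (v : Fin k → (Fin n → ℝ)) :
    (∏ j ∈ univ.filter (fun j : Fin n => n - k ≤ (j : ℕ)), σ j) ^ 2 *
        (gramMatrix v).det ≤ (gramMatrix fun i => A.mulVec (v i)).det ∧
    (gramMatrix fun i => A.mulVec (v i)).det ≤
      (∏ j ∈ univ.filter (fun j : Fin n => (j : ℕ) < k), σ j) ^ 2 *
        (gramMatrix v).det := by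
  classical
  obtain ⟨hanti, e, he⟩ := hσ
  set hH : (Aᴴ * A).IsHermitian := Matrix.isHermitian_conjTranspose_mul_self A with hHdef
  set lam : Fin n → ℝ := hH.eigenvalues with hlamdef
  have hlam0 : ∀ j, 0 ≤ lam j := fun j =>
    Matrix.eigenvalues_conjTranspose_mul_self_nonneg A j
  have hσ0 : ∀ i, 0 ≤ σ i := fun i => (he i) ▸ Real.sqrt_nonneg _
  set τ : Fin n → ℝ := fun j => σ j ^ 2 with hτdef
  have hτlam : ∀ i, τ (e.symm i) = lam i := by
    intro i
    have : σ (e.symm i) = Real.sqrt (lam (e (e.symm i))) := he (e.symm i)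
    rw [Equiv.apply_symm_apply] at this
    simp only [hτdef, this]
    exact Real.sq_sqrt (hlam0 i)
  have hτ0 : ∀ j, 0 ≤ τ j := fun j => sq_nonneg _
  have hτanti : Antitone τ := by
    intro a b hab
    exact pow_le_pow_left₀ (hσ0 b) (hanti hab) 2
  set U : Matrix (Fin n) (Fin n) ℝ := (Matrix.IsHermitian.eigenvectorUnitary hH : Matrix (Fin n) (Fin n) ℝ) with hUdef
  set M : Matrix (Fin k) (Fin n) ℝ := Matrix.of v with hMdef
  set N : Matrix (Fin k) (Fin n) ℝ := M * U with hNdef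
  have hUmem := (Matrix.IsHermitian.eigenvectorUnitary hH).2
  have hU1 : U * star U = 1 := ((Unitary.mem_iff).mp hUmem).2
  have hstarU : star U = Uᵀ := by
    rw [Matrix.star_eq_conjTranspose, Matrix.conjTranspose_eq_transpose_of_trivial]
  have hGv : gramMatrix v = N * Matrix.diagonal (fun _ : Fin n => (1 : ℝ)) * Nᵀ := by
    have h1 : gramMatrix v = M * Mᵀ := by
      ext i j
      simp [gramMatrix, Matrix.mul_apply, Matrix.transpose_apply, dotProduct, hMdef]
    have hd1 : Matrix.diagonal (fun _ : Fin n => (1 : ℝ)) = 1 := Matrix.diagonal_one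
    rw [hd1, Matrix.mul_one, h1, hNdef, Matrix.transpose_mul, ← Matrix.mul_assoc,
      Matrix.mul_assoc M U, ← hstarU, hU1, Matrix.mul_one]
  have hGA : gramMatrix (fun i => A.mulVec (v i)) = N * Matrix.diagonal lam * Nᵀ := by
    have hrow : ∀ (i : Fin k) (r : Fin n), (M * Aᵀ) i r = A.mulVec (v i) r := by
      intro i r
      simp [Matrix.mul_apply, Matrix.mulVec, Matrix.transpose_apply, dotProduct,
        hMdef, mul_comm]
    have h2 : gramMatrix (fun i => A.mulVec (v i)) = (M * Aᵀ) * (M * Aᵀ)ᵀ := by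
      ext i j
      have hBB : ((M * Aᵀ) * (M * Aᵀ)ᵀ) i j = ∑ r, (M * Aᵀ) i r * (M * Aᵀ) j r := by
        rw [Matrix.mul_apply]
        simp only [Matrix.transpose_apply]
      rw [hBB]
      simp only [hrow]
      simp [gramMatrix, dotProduct]
    have h3 : (M * Aᵀ) * (M * Aᵀ)ᵀ = M * (Aᴴ * A) * Mᵀ := by
      rw [Matrix.transpose_mul, Matrix.transpose_transpose,
        Matrix.conjTranspose_eq_transpose_of_trivial]
      rw [Matrix.mul_assoc, Matrix.mul_assoc, Matrix.mul_assoc]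
    have h4 : Aᴴ * A = U * Matrix.diagonal lam * star U := by
      have := hH.spectral_theorem
      rwa [RCLike.ofReal_real_eq_id, Function.id_comp] at this
    rw [h2, h3, h4, hstarU]
    rw [hNdef, Matrix.transpose_mul]
    rw [← Matrix.mul_assoc, ← Matrix.mul_assoc, ← Matrix.mul_assoc]
  have key : ∀ g : Fin k → Fin n, StrictMono g →
      (∏ j ∈ univ.filter (fun j : Fin n => n - k ≤ (j : ℕ)), σ j) ^ 2 ≤ (∏ i, lam (g i)) ∧
      (∏ i, lam (g i)) ≤ (∏ j ∈ univ.filter (fun j : Fin n => (j : ℕ) < k), σ j) ^ 2 := by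
    intro g hg
    have hinj : Function.Injective (fun i => e.symm (g i)) :=
      fun a b hab => hg.injective (e.symm.injective hab)
    set h : Fin k → Fin n := fun i => e.symm (g i) with hhdef
    set π := Tuple.sort h with hπdef
    have hmono : StrictMono (h ∘ π) :=
      (Tuple.monotone_sort h).strictMono_of_injective (hinj.comp π.injective)
    have hprod : (∏ i, lam (g i)) = ∏ i, τ ((h ∘ π) i) := by
      have e1 : (∏ i, τ ((h ∘ π) i)) = ∏ i, τ (h i) :=
        Equiv.prod_comp π (fun i => τ (h i))
      rw [e1]
      apply Finset.prod_congr rfl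
      intro i _
      rw [hhdef]
      exact (hτlam (g i)).symm
    have hb := prod_bounds hk τ hτanti hτ0 hmono
    have hsq1 : (∏ j ∈ univ.filter (fun j : Fin n => n - k ≤ (j : ℕ)), σ j) ^ 2
        = ∏ j ∈ univ.filter (fun j : Fin n => n - k ≤ (j : ℕ)), τ j := by
      rw [hτdef, ← Finset.prod_pow]
    have hsq2 : (∏ j ∈ univ.filter (fun j : Fin n => (j : ℕ) < k), σ j) ^ 2
        = ∏ j ∈ univ.filter (fun j : Fin n => (j : ℕ) < k), τ j := by
      rw [hτdef, ← Finset.prod_pow]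
    rw [hprod, hsq1, hsq2]
    exact hb
  rw [hGv, hGA, cauchyBinet_diag, cauchyBinet_diag]
  simp only [Finset.prod_const_one, one_mul]
  constructor
  · rw [Finset.mul_sum]
    apply Finset.sum_le_sum
    intro g hg
    simp only [Finset.mem_filter, mem_univ, true_and] at hg
    exact mul_le_mul_of_nonneg_right ((key g hg).1) (sq_nonneg _)
  · rw [Finset.mul_sum]
    apply Finset.sum_le_sum
    intro g hg
    simp only [Finset.mem_filter, mem_univ, true_and] at hg
    exact mul_le_mul_of_nonneg_right ((key g hg).2) (sq_nonneg _)
end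

section
/- Let P ⊂ Σ_n be a convex polytope contained in the standard n-simplex, and define the Baran distance d(x,y) = 2·arccos(⟨φ(x), φ(y)⟩) where φ(x) = (√(1 − ∑ x_i), √x₁, …, √x_n). Then the diameter of P with respect to d equals the maximum of d over pairs of vertices of P. -/
open Finset

/-- The standard `n`-simplex `Σ_n = {x ∈ ℝⁿ : xᵢ ≥ 0, ∑ xᵢ ≤ 1}`. -/
def stdSimplexSet (n : ℕ) : Set (Fin n → ℝ) :=
  {x | (∀ i, 0 ≤ x i) ∧ ∑ i, x i ≤ 1}

/-- The Baran distance on `Σ_n`: `d(x,y) = 2 arccos⟨φ(x), φ(y)⟩` with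
`φ(x) = (√(1 − ∑ xᵢ), √x₁, …, √x_n)` taking values in the unit sphere of `ℝ^{n+1}`. -/
noncomputable def baranDist {n : ℕ} (x y : Fin n → ℝ) : ℝ :=
  2 * Real.arccos
      (Real.sqrt (1 - ∑ i, x i) * Real.sqrt (1 - ∑ i, y i) +
        ∑ i, Real.sqrt (x i) * Real.sqrt (y i))

lemma baranDist_comm {n : ℕ} (x y : Fin n → ℝ) : baranDist x y = baranDist y x := by
  unfold baranDist
  congr 2
  rw [mul_comm]
  congr 1
  exact Finset.sum_congr rfl fun i _ => mul_comm _ _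

lemma stdSimplexSet_convex (n : ℕ) : Convex ℝ (stdSimplexSet n) := by
  intro x hx y hy a b ha hb hab
  refine ⟨fun i => add_nonneg (mul_nonneg ha (hx.1 i)) (mul_nonneg hb (hy.1 i)), ?_⟩
  have : ∑ i, (a • x + b • y) i = a * ∑ i, x i + b * ∑ i, y i := by
    simp [Finset.sum_add_distrib, Finset.mul_sum]
  rw [this]
  calc a * ∑ i, x i + b * ∑ i, y i ≤ a * 1 + b * 1 :=
        add_le_add (mul_le_mul_of_nonneg_left hx.2 ha) (mul_le_mul_of_nonneg_left hy.2 hb)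
    _ = 1 := by linarith

lemma arccos_antitone : Antitone Real.arccos := fun u v h => by
  simp only [Real.arccos_eq_pi_div_two_sub_arcsin]
  linarith [Real.monotone_arcsin h]

/-- For fixed nonnegative coefficients, the "inner product" part of the Baran
distance is concave on the standard simplex. -/
lemma baran_inner_concave {n : ℕ} (c0 : ℝ) (c : Fin n → ℝ) (hc0 : 0 ≤ c0)
    (hc : ∀ i, 0 ≤ c i) :
    ConcaveOn ℝ (stdSimplexSet n)
      (fun x => Real.sqrt (1 - ∑ i, x i) * c0 + ∑ i, Real.sqrt (x i) * c i) := by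
  refine ⟨stdSimplexSet_convex n, ?_⟩
  intro x hx y hy a b ha hb hab
  have hsq := Real.strictConcaveOn_sqrt.concaveOn
  have key : ∀ u v : ℝ, 0 ≤ u → 0 ≤ v →
      a * Real.sqrt u + b * Real.sqrt v ≤ Real.sqrt (a * u + b * v) := by
    intro u v hu hv
    simpa using hsq.2 (Set.mem_Ici.2 hu) (Set.mem_Ici.2 hv) ha hb hab
  have h1 : a * Real.sqrt (1 - ∑ i, x i) + b * Real.sqrt (1 - ∑ i, y i) ≤
      Real.sqrt (1 - ∑ i, (a • x + b • y) i) := by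
    have hs : (1 : ℝ) - ∑ i, (a • x + b • y) i
        = a * (1 - ∑ i, x i) + b * (1 - ∑ i, y i) := by
      have hx' : ∑ i, (a • x + b • y) i = a * ∑ i, x i + b * ∑ i, y i := by
        simp [Finset.sum_add_distrib, Finset.mul_sum]
      rw [hx']
      linear_combination -hab
    rw [hs]
    exact key _ _ (by linarith [hx.2]) (by linarith [hy.2])
  have h2 : ∀ i : Fin n, a * Real.sqrt (x i) + b * Real.sqrt (y i) ≤
      Real.sqrt ((a • x + b • y) i) := by
    intro i
    have : (a • x + b • y) i = a * x i + b * y i := by simp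
    rw [this]
    exact key _ _ (hx.1 i) (hy.1 i)
  simp only [smul_eq_mul]
  calc a * (Real.sqrt (1 - ∑ i, x i) * c0 + ∑ i, Real.sqrt (x i) * c i)
        + b * (Real.sqrt (1 - ∑ i, y i) * c0 + ∑ i, Real.sqrt (y i) * c i)
      = (a * Real.sqrt (1 - ∑ i, x i) + b * Real.sqrt (1 - ∑ i, y i)) * c0
        + ∑ i, (a * Real.sqrt (x i) + b * Real.sqrt (y i)) * c i := by
        simp only [mul_add, add_mul, Finset.mul_sum, Finset.sum_add_distrib, mul_assoc]
        ring
    _ ≤ Real.sqrt (1 - ∑ i, (a • x + b • y) i) * c0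
        + ∑ i, Real.sqrt ((a • x + b • y) i) * c i := by
        refine add_le_add (mul_le_mul_of_nonneg_right h1 hc0) ?_
        exact Finset.sum_le_sum fun i _ => mul_le_mul_of_nonneg_right (h2 i) (hc i)

/-- Minimum principle: the Baran distance from a fixed point is maximized over a
convex hull at one of the generating points. -/
lemma baranDist_le_of_mem_convexHull {n : ℕ} {E : Set (Fin n → ℝ)}
    (hE : E ⊆ stdSimplexSet n) {x y : Fin n → ℝ}
    (hx : x ∈ convexHull ℝ E) :
    ∃ e ∈ E, baranDist x y ≤ baranDist e y := by
  have hconc := baran_inner_concave (Real.sqrt (1 - ∑ i, y i)) (fun i => Real.sqrt (y i))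
    (Real.sqrt_nonneg _) (fun i => Real.sqrt_nonneg _)
  obtain ⟨e, heE, he⟩ := hconc.exists_le_of_mem_convexHull hE hx
  refine ⟨e, heE, ?_⟩
  unfold baranDist
  have := arccos_antitone he
  linarith

/-- The diameter, with respect to the Baran distance, of a convex polytope
`P = conv(X) ⊆ Σ_n` equals the maximum of the Baran distance over pairs of its
vertices (extreme points). -/
theorem baran_diameter_polytope_eq_sup_over_vertices
    (n : ℕ) (X : Finset (Fin n → ℝ)) (hX : X.Nonempty)
    (hP : convexHull ℝ (X : Set (Fin n → ℝ)) ⊆ stdSimplexSet n) :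
    sSup {r : ℝ | ∃ x ∈ convexHull ℝ (X : Set (Fin n → ℝ)),
        ∃ y ∈ convexHull ℝ (X : Set (Fin n → ℝ)), r = baranDist x y} =
      sSup {r : ℝ | ∃ x ∈ Set.extremePoints ℝ (convexHull ℝ (X : Set (Fin n → ℝ))),
        ∃ y ∈ Set.extremePoints ℝ (convexHull ℝ (X : Set (Fin n → ℝ))),
          r = baranDist x y} := by
  set S : Set (Fin n → ℝ) := (X : Set (Fin n → ℝ)) with hS
  set P : Set (Fin n → ℝ) := convexHull ℝ S with hPdef
  set E : Set (Fin n → ℝ) := Set.extremePoints ℝ P with hEdef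
  set A : Set ℝ := {r : ℝ | ∃ x ∈ P, ∃ y ∈ P, r = baranDist x y} with hA
  set B : Set ℝ := {r : ℝ | ∃ x ∈ E, ∃ y ∈ E, r = baranDist x y} with hB
  have hcomp : IsCompact P := X.finite_toSet.isCompact_convexHull (𝕜 := ℝ)
  have hPne : P.Nonempty := by
    obtain ⟨x, hx⟩ := hX
    exact ⟨x, subset_convexHull ℝ S hx⟩
  have hEne : E.Nonempty := hcomp.extremePoints_nonempty hPne
  have hEX : E ⊆ S := extremePoints_convexHull_subset
  have hEP : E ⊆ P := extremePoints_subset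
  have hEhull : convexHull ℝ E = P := by
    have hclo := closure_convexHull_extremePoints hcomp (convex_convexHull ℝ S)
    have hcl : IsClosed (convexHull ℝ E) :=
      (X.finite_toSet.subset hEX).isClosed_convexHull (𝕜 := ℝ)
    rw [hcl.closure_eq] at hclo
    exact hclo
  -- bounds
  have hbd : ∀ r ∈ A, r ≤ 2 * Real.pi := by
    rintro r ⟨x, -, y, -, rfl⟩
    unfold baranDist
    linarith [Real.arccos_le_pi (Real.sqrt (1 - ∑ i, x i) * Real.sqrt (1 - ∑ i, y i) +
      ∑ i, Real.sqrt (x i) * Real.sqrt (y i))]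
  have hAbdd : BddAbove A := ⟨2 * Real.pi, hbd⟩
  have hBsubA : B ⊆ A := by
    rintro r ⟨x, hx, y, hy, rfl⟩
    exact ⟨x, hEP hx, y, hEP hy, rfl⟩
  have hBbdd : BddAbove B := hAbdd.mono hBsubA
  have hBne : B.Nonempty := by
    obtain ⟨e, he⟩ := hEne
    exact ⟨baranDist e e, e, he, e, he, rfl⟩
  have hAne : A.Nonempty := by
    obtain ⟨r, hr⟩ := hBne
    exact ⟨r, hBsubA hr⟩
  refine le_antisymm ?_ (csSup_le_csSup hAbdd hBne hBsubA)
  refine csSup_le hAne ?_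
  rintro r ⟨x, hx, y, hy, rfl⟩
  have hEstd : E ⊆ stdSimplexSet n := fun e he => hP (hEP he)
  have hx' : x ∈ convexHull ℝ E := by rw [hEhull]; exact hx
  have hy' : y ∈ convexHull ℝ E := by rw [hEhull]; exact hy
  obtain ⟨e, heE, he⟩ := baranDist_le_of_mem_convexHull hEstd hx' (y := y)
  obtain ⟨e', he'E, he'⟩ := baranDist_le_of_mem_convexHull hEstd hy' (y := e)
  have : baranDist x y ≤ baranDist e' e := by
    calc baranDist x y ≤ baranDist e y := he
      _ = baranDist y e := baranDist_comm _ _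
      _ ≤ baranDist e' e := he'
  exact this.trans (le_csSup hBbdd ⟨e', he'E, e, heE, rfl⟩)
end

section
/- Let T_m = {cos(iπ/m) : i = 0, …, m} ⊂ [−1,1] be the Chebyshev–Lobatto points, and let r < m. Then for every real polynomial p of degree at most r: sup_{x ∈ [−1,1]} |p(x)| ≤ (1/cos(πr/(2m))) · max_{i} |p(cos(iπ/m))|. -/
open Polynomial Set Finset Real


private lemma cosNatPi (k : ℕ) : Real.cos (k * Real.pi) = (-1 : ℝ)^k := by
  induction k with
  | zero => simp
  | succ n ih =>
    have : ((n:ℝ)+1) * Real.pi = n * Real.pi + Real.pi := by ring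
    rw [Nat.cast_succ, this, Real.cos_add_pi, ih, pow_succ]
    ring

private lemma cosLip (x y : ℝ) : |Real.cos x - Real.cos y| ≤ |x - y| := by
  rw [Real.cos_sub_cos]
  rw [abs_mul, abs_mul, abs_neg]
  have h1 : |Real.sin ((x+y)/2)| ≤ 1 := Real.abs_sin_le_one _
  have h2 : |Real.sin ((x-y)/2)| ≤ |(x-y)/2| := Real.abs_sin_le_abs
  calc |(2:ℝ)| * |Real.sin ((x+y)/2)| * |Real.sin ((x-y)/2)|
      ≤ 2 * 1 * |(x-y)/2| := by
        apply mul_le_mul _ h2 (abs_nonneg _) (by norm_num)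
        apply mul_le_mul _ h1 (abs_nonneg _) (by norm_num)
        simp
    _ = |x - y| := by rw [abs_div]; simp [abs_of_nonneg]; ring

private lemma expInj {x y : ℝ} (h : |x - y| < 2 * Real.pi)
    (he : Complex.exp (x * Complex.I) = Complex.exp (y * Complex.I)) : x = y := by
  obtain ⟨k, hk⟩ := Complex.exp_eq_exp_iff_exists_int.mp he
  have : (x : ℂ) = y + k * (2 * Real.pi) := by
    have h2 : ((x:ℂ) - y - k*(2*Real.pi)) * Complex.I = 0 := by linear_combination hk
    rcases mul_eq_zero.mp h2 with h3 | h3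
    · linear_combination h3
    · exact absurd h3 Complex.I_ne_zero
  have hxy : x = y + k * (2 * Real.pi) := by exact_mod_cast this
  have hk0 : k = 0 := by
    by_contra hk0
    have : (1:ℝ) ≤ |(k:ℝ)| := by
      rw [← Int.cast_abs]
      exact_mod_cast Int.one_le_abs (by exact_mod_cast hk0)
    have hπ : (0:ℝ) < 2 * Real.pi := by positivity
    have : 2 * Real.pi ≤ |(k:ℝ)| * (2 * Real.pi) := by nlinarith
    rw [hxy] at h
    rw [show y + k * (2*Real.pi) - y = k * (2*Real.pi) by ring, abs_mul, abs_of_pos hπ] at h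
    linarith
  rw [hxy, hk0]; simp

private lemma noChain (P : Polynomial ℂ) (hP : P ≠ 0) (L : List ℝ)
    (hchain : L.Chain' (· < ·))
    (hspan : ∀ x ∈ L, ∀ y ∈ L, |x - y| < 2 * Real.pi)
    (hroot : ∀ x ∈ L, P.eval (Complex.exp (x * Complex.I)) = 0)
    (hlen : P.natDegree + 1 ≤ L.length) : False := by
  classical
  set f : ℝ → ℂ := fun x => Complex.exp (x * Complex.I) with hf
  have hpw : L.Pairwise (· < ·) := List.isChain_iff_pairwise.mp hchain
  have hne : (L.map f).Pairwise (· ≠ ·) := by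
    rw [List.pairwise_map]
    refine hpw.imp_of_mem ?_
    intro a b ha hb hab heq
    exact absurd (expInj (hspan a ha b hb) heq) (ne_of_lt hab)
  have hnd : (L.map f).Nodup := hne
  have hsub : (L.map f).toFinset ⊆ P.roots.toFinset := by
    intro z hz
    rw [List.mem_toFinset, List.mem_map] at hz
    obtain ⟨x, hx, rfl⟩ := hz
    rw [Multiset.mem_toFinset, Polynomial.mem_roots']
    exact ⟨hP, hroot x hx⟩
  have h1 : (L.map f).toFinset.card = L.length := by
    rw [List.toFinset_card_of_nodup hnd, List.length_map]
  have h2 : P.roots.toFinset.card ≤ P.natDegree :=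
    le_trans (Multiset.toFinset_card_le _) (Polynomial.card_roots' P)
  have := Finset.card_le_card hsub
  omega

private lemma existsChain (N : ℕ) : ∀ (u : ℝ → ℝ), Continuous u → ∀ (b d : ℝ), 0 < d →
    (∀ k : ℕ, k ≤ N → 0 < (-1:ℝ)^k * u (b + k * d)) →
    ∃ L : List ℝ, L.length = N ∧ L.Chain' (· < ·) ∧
      ∀ x ∈ L, u x = 0 ∧ b < x ∧ x < b + N * d := by
  induction N with
  | zero => intro u _ b d _ _; exact ⟨[], rfl, List.isChain_nil, by simp⟩
  | succ N ih =>
    intro u hu b d hd hsign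
    have h0 : 0 < u b := by have := hsign 0 (Nat.zero_le _); simpa using this
    have h1 : u (b + d) < 0 := by
      have := hsign 1 (by omega)
      norm_num at this
      linarith
    -- zero in (b, b+d)
    have hivt : (0:ℝ) ∈ Set.Ioo (u (b+d)) (u b) := ⟨h1, h0⟩
    obtain ⟨ξ, hξmem, hξ⟩ := intermediate_value_Ioo' (by linarith : b ≤ b + d)
      (hu.continuousOn) hivt
    -- IH on -u with base b+d
    have hsign' : ∀ k : ℕ, k ≤ N → 0 < (-1:ℝ)^k * (fun x => -u x) (b + d + k * d) := by
      intro k hk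
      have := hsign (k+1) (by omega)
      have hc : b + (↑(k+1):ℝ) * d = b + d + k * d := by push_cast; ring
      rw [hc] at this
      have hpow : ((-1:ℝ))^(k+1) = -((-1:ℝ))^k := by rw [pow_succ]; ring
      rw [hpow] at this
      simpa using this
    obtain ⟨L, hlen, hchain, hprop⟩ := ih (fun x => -u x) hu.neg (b + d) d hd hsign'
    refine ⟨ξ :: L, by simp [hlen], ?_, ?_⟩
    · refine List.isChain_cons.mpr ?_
      refine ⟨?_, hchain⟩
      intro y hy
      have := (hprop y (List.mem_of_mem_head? hy)).2.1
      linarith [hξmem.2]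
    · intro x hx
      rcases List.mem_cons.mp hx with rfl | hx
      · refine ⟨hξ, hξmem.1, ?_⟩
        have : (N:ℝ) ≥ 0 := Nat.cast_nonneg _
        push_cast
        nlinarith [hξmem.2]
      · obtain ⟨hz, hlb, hub⟩ := hprop x hx
        have hz' : u x = 0 := by simpa using hz
        refine ⟨hz', by linarith, ?_⟩
        push_cast
        push_cast at hub
        linarith

private lemma existsP (p : Polynomial ℝ) (n : ℕ) (hdeg : p.natDegree ≤ n) (A a : ℝ) :
    ∃ P : Polynomial ℂ, P.natDegree ≤ 2 * n ∧ ∀ θ : ℝ,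
      P.eval (Complex.exp (θ * Complex.I)) =
        (Complex.exp (θ * Complex.I))^n *
          (((p.eval (Real.cos θ) : ℝ) : ℂ) - ((A * Real.cos (n * (θ - a)) : ℝ) : ℂ)) := by
  classical
  set Q : Polynomial ℂ :=
    ∑ k ∈ Finset.range (n+1),
      C ((p.coeff k : ℂ)) * X^(n-k) * (C (2⁻¹ : ℂ) * (X^2 + 1))^k with hQ
  set R : Polynomial ℂ :=
    C ((A:ℂ)/2) * (C (Complex.exp (-(n*a) * Complex.I)) * X^(2*n)
      + C (Complex.exp ((n*a) * Complex.I))) with hR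
  refine ⟨Q - R, ?_, ?_⟩
  · apply le_trans (Polynomial.natDegree_sub_le _ _)
    apply max_le
    · apply Polynomial.natDegree_sum_le_of_forall_le
      intro k hk
      rw [Finset.mem_range] at hk
      have h1 : (C ((p.coeff k : ℂ)) * X^(n-k) * (C (2⁻¹ : ℂ) * (X^2 + 1))^k).natDegree
          ≤ (C ((p.coeff k : ℂ)) * X^(n-k)).natDegree + ((C (2⁻¹ : ℂ) * (X^2 + 1))^k).natDegree :=
        Polynomial.natDegree_mul_le
      have h2 : (C ((p.coeff k : ℂ)) * X^(n-k)).natDegree ≤ n - k := by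
        apply le_trans Polynomial.natDegree_mul_le
        simp [Polynomial.natDegree_X_pow]
      have h3 : ((C (2⁻¹ : ℂ) * (X^2 + 1)).natDegree) ≤ 2 := by
        apply le_trans Polynomial.natDegree_mul_le
        have : ((X^2 + 1 : Polynomial ℂ)).natDegree ≤ 2 := by
          apply le_trans (Polynomial.natDegree_add_le _ _)
          simp [Polynomial.natDegree_X_pow]
        simp [this]
      have h4 : ((C (2⁻¹ : ℂ) * (X^2 + 1))^k).natDegree ≤ k * 2 := by
        apply le_trans (Polynomial.natDegree_pow_le)
        exact Nat.mul_le_mul_left k h3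
      omega
    · rw [hR]
      apply le_trans Polynomial.natDegree_mul_le
      have : (C (Complex.exp (-(n*a) * Complex.I)) * X^(2*n)
          + C (Complex.exp ((n*a) * Complex.I))).natDegree ≤ 2*n := by
        apply le_trans (Polynomial.natDegree_add_le _ _)
        apply max_le
        · apply le_trans Polynomial.natDegree_mul_le
          simp [Polynomial.natDegree_X_pow]
        · simp
      simp [this]
  · intro θ
    set z : ℂ := Complex.exp (θ * Complex.I) with hz
    have hz0 : z ≠ 0 := Complex.exp_ne_zero _
    have hkey : z^2 + 1 = z * (2 * Real.cos θ) := by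
      have h2c : 2 * Complex.cos (θ:ℂ) = Complex.exp ((θ:ℂ) * Complex.I) + Complex.exp (-(θ:ℂ) * Complex.I) :=
        Complex.two_cos _
      have e2 : Complex.exp ((θ:ℂ) * Complex.I) * Complex.exp (-(θ:ℂ) * Complex.I) = 1 := by
        rw [← Complex.exp_add]
        rw [show ((θ:ℂ) * Complex.I + -(θ:ℂ) * Complex.I) = 0 by ring, Complex.exp_zero]
      rw [hz, pow_two]
      push_cast
      linear_combination -(Complex.exp ((θ:ℂ) * Complex.I) * h2c) - e2
    have hQeval : Q.eval z = z^n * ((p.eval (Real.cos θ) : ℝ) : ℂ) := by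
      rw [hQ]
      rw [Polynomial.eval_finset_sum]
      have hterm : ∀ k ∈ Finset.range (n+1),
          (C ((p.coeff k : ℂ)) * X^(n-k) * (C (2⁻¹ : ℂ) * (X^2 + 1))^k).eval z
            = z^n * (p.coeff k : ℂ) * ((Real.cos θ : ℂ))^k := by
        intro k hk
        rw [Finset.mem_range] at hk
        simp only [Polynomial.eval_mul, Polynomial.eval_pow, Polynomial.eval_C,
          Polynomial.eval_add, Polynomial.eval_one, Polynomial.eval_X]
        rw [show ((2⁻¹ : ℂ) * (z^2 + 1)) = (z^2+1)/2 by ring, hkey]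
        rw [show (z * (2 * (Real.cos θ:ℂ)) / 2) = z * Real.cos θ by ring]
        rw [mul_pow]
        have hzz : z^(n-k) * z^k = z^n := by
          rw [← pow_add]; congr 1; omega
        linear_combination ((p.coeff k : ℂ) * ((Real.cos θ:ℂ))^k) * hzz
      rw [Finset.sum_congr rfl hterm]
      rw [Polynomial.eval_eq_sum_range' (lt_of_le_of_lt hdeg (Nat.lt_succ_self n)) (Real.cos θ)]
      push_cast
      rw [Finset.mul_sum]
      apply Finset.sum_congr rfl
      intro k _
      ring
    have hReval : R.eval z = z^n * ((A * Real.cos (n * (θ - a)) : ℝ) : ℂ) := by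
      rw [hR]
      simp only [Polynomial.eval_mul, Polynomial.eval_add, Polynomial.eval_C,
        Polynomial.eval_pow, Polynomial.eval_X]
      have hzn : z^n = Complex.exp ((n*θ) * Complex.I) := by
        rw [hz, ← Complex.exp_nat_mul]; ring_nf
      have hz2n : z^(2*n) = Complex.exp ((2*n*θ) * Complex.I) := by
        rw [hz, ← Complex.exp_nat_mul]; push_cast; ring_nf
      rw [hz2n, hzn]
      have h2c : 2 * Complex.cos (((n:ℝ)*(θ-a) : ℂ))
          = Complex.exp ((((n:ℝ):ℂ)*((θ:ℂ)-(a:ℂ))) * Complex.I)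
            + Complex.exp (-(((n:ℝ):ℂ)*((θ:ℂ)-(a:ℂ))) * Complex.I) := by
        have := Complex.two_cos ((((n:ℝ):ℂ))*((θ:ℂ)-(a:ℂ)))
        convert this using 3 <;> push_cast <;> ring
      have e1 : Complex.exp (-((n:ℂ)*(a:ℂ)) * Complex.I) * Complex.exp (2*(n:ℂ)*(θ:ℂ)*Complex.I)
          = Complex.exp ((n:ℂ)*(θ:ℂ)*Complex.I)
            * Complex.exp ((((n:ℝ):ℂ)*((θ:ℂ)-(a:ℂ))) * Complex.I) := by
        rw [← Complex.exp_add, ← Complex.exp_add]; congr 1; push_cast; ring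
      have e2 : Complex.exp (((n:ℂ)*(a:ℂ)) * Complex.I)
          = Complex.exp ((n:ℂ)*(θ:ℂ)*Complex.I)
            * Complex.exp (-(((n:ℝ):ℂ)*((θ:ℂ)-(a:ℂ))) * Complex.I) := by
        rw [← Complex.exp_add]; congr 1; push_cast; ring
      push_cast
      push_cast at h2c e1 e2
      linear_combination ((A:ℂ)/2) * e1 + ((A:ℂ)/2) * e2
        - (Complex.exp ((n:ℂ)*(θ:ℂ)*Complex.I) * (A:ℂ)/2) * h2c
    rw [Polynomial.eval_sub, hQeval, hReval]
    ring

set_option maxHeartbeats 1000000 in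
private lemma keyLemma (p : Polynomial ℝ) (n : ℕ) (hn : 1 ≤ n) (hdeg : p.natDegree ≤ n)
    (M : ℝ) (hM : 0 < M) (hbd : ∀ θ : ℝ, |p.eval (Real.cos θ)| ≤ M)
    (θs : ℝ) (hmax : p.eval (Real.cos θs) = M)
    (φ : ℝ) (hφ0 : 0 ≤ φ) (hφ1 : φ ≤ Real.pi / (2*n)) :
    M * Real.cos (n * φ) ≤ p.eval (Real.cos (θs + φ)) := by
  by_contra hcon
  push_neg at hcon
  set t : ℝ → ℝ := fun θ => p.eval (Real.cos θ) with ht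
  have hπ := Real.pi_pos
  have hnR : (0:ℝ) < n := by exact_mod_cast hn
  -- φ > 0
  have hφpos : 0 < φ := by
    rcases eq_or_lt_of_le hφ0 with h | h
    · exfalso
      rw [← h] at hcon
      simp only [mul_zero, Real.cos_zero, mul_one, add_zero] at hcon
      rw [hmax] at hcon
      exact lt_irrefl _ hcon
    · exact h
  set t0 : ℝ := t (θs + φ) with ht0
  set ε : ℝ := M * Real.cos (n*φ) - t0 with hε
  have hεpos : 0 < ε := by rw [hε]; dsimp [t0]; linarith
  have hnφ : (n:ℝ) * φ ≤ Real.pi / 2 := by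
    have h1 : (n:ℝ) * φ ≤ n * (Real.pi / (2*n)) := by nlinarith
    have h2 : (n:ℝ) * (Real.pi / (2*n)) = Real.pi / 2 := by field_simp
    linarith
  have hcosφ : 0 ≤ Real.cos ((n:ℝ)*φ) := by
    apply Real.cos_nonneg_of_mem_Icc
    constructor
    · nlinarith
    · exact hnφ
  set η : ℝ := min (Real.pi/(4*n)) (ε/(4*n*M)) with hηdef
  have hη0 : 0 < η := by
    apply lt_min
    · positivity
    · positivity
  have hη1 : η ≤ Real.pi/(4*n) := min_le_left _ _
  have hη2 : η ≤ ε/(4*n*M) := min_le_right _ _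
  have hnη : (n:ℝ)*η ≤ Real.pi/4 := by
    have : (n:ℝ) * (Real.pi/(4*n)) = Real.pi/4 := by field_simp
    nlinarith
  have hnη0 : 0 < (n:ℝ)*η := by positivity
  set c0 : ℝ := Real.cos ((n:ℝ)*η) with hc0def
  have hc00 : 0 < c0 := by
    apply Real.cos_pos_of_mem_Ioo
    constructor
    · nlinarith
    · nlinarith
  have hc01 : c0 < 1 := by
    rcases lt_or_ge c0 1 with h | h
    · exact h
    · exfalso
      have hle : c0 ≤ 1 := Real.cos_le_one _
      have heq : c0 = 1 := le_antisymm hle h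
      have := (Real.cos_eq_one_iff_of_lt_of_lt
        (by linarith : -(2*Real.pi) < (n:ℝ)*η) (by linarith : (n:ℝ)*η < 2*Real.pi)).mp heq
      linarith
  have hinv : c0 * c0⁻¹ = 1 := mul_inv_cancel₀ (ne_of_gt hc00)
  set A : ℝ := min (2*M) (M*(1+c0⁻¹)/2) with hAdef
  have h1c : 1 < c0⁻¹ := by nlinarith [hinv, hc00, hc01]
  have hA1 : M < A := by
    apply lt_min
    · linarith
    · have := mul_pos hM (sub_pos.mpr h1c)
      linarith [this]
  have hA2 : A ≤ 2*M := min_le_left _ _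
  have hA0 : 0 < A := lt_trans hM hA1
  have hAc0 : A * c0 < M := by
    have hA3 : A ≤ M*(1+c0⁻¹)/2 := min_le_right _ _
    have h4 : A * c0 ≤ (M*(1+c0⁻¹)/2) * c0 := mul_le_mul_of_nonneg_right hA3 (le_of_lt hc00)
    have h5 : (M*(1+c0⁻¹)/2) * c0 = M*(c0 + c0*c0⁻¹)/2 := by ring
    rw [hinv] at h5
    have h6 : M*c0 < M*1 := mul_lt_mul_of_pos_left hc01 hM
    linarith
  have hAη : A * ((n:ℝ)*η) < ε := by
    have h1 : (n:ℝ)*η ≤ (n:ℝ)*(ε/(4*n*M)) := mul_le_mul_of_nonneg_left hη2 (le_of_lt hnR)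
    have h2 : (n:ℝ)*(ε/(4*n*M)) = ε/(4*M) := by field_simp
    rw [h2] at h1
    have h3 : A * ((n:ℝ)*η) ≤ (2*M) * ((n:ℝ)*η) := mul_le_mul_of_nonneg_right hA2 (le_of_lt hnη0)
    have h4 : (2*M) * ((n:ℝ)*η) ≤ (2*M) * (ε/(4*M)) :=
      mul_le_mul_of_nonneg_left h1 (by linarith)
    have h5 : (2*M) * (ε/(4*M)) = ε/2 := by field_simp; ring
    linarith
  set a : ℝ := θs - η with hadef
  set u : ℝ → ℝ := fun θ => t θ - A * Real.cos (n*(θ - a)) with hu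
  have htcont : Continuous t := (Polynomial.continuous p).comp Real.continuous_cos
  have hucont : Continuous u := by
    apply htcont.sub
    exact continuous_const.mul (Real.continuous_cos.comp (by continuity))
  -- node values
  have hak : ∀ k : ℕ, u (a + k*(Real.pi/n)) = t (a + k*(Real.pi/n)) - A * (-1)^k := by
    intro k
    have harg : (n:ℝ) * ((a + k*(Real.pi/n)) - a) = k * Real.pi := by field_simp; ring
    simp only [hu]
    rw [harg, cosNatPi]
  -- sign condition for existsChain
  have hsgn : ∀ k : ℕ, k ≤ 2*n-1 → 0 < (-1:ℝ)^k * u ((a + Real.pi/n) + k*(Real.pi/n)) := by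
    intro k _
    have hpt : (a + Real.pi/n) + (k:ℝ)*(Real.pi/n) = a + ((k+1 : ℕ):ℝ)*(Real.pi/n) := by
      push_cast; ring
    rw [hpt, hak (k+1)]
    set y : ℝ := t (a + ((k+1:ℕ):ℝ)*(Real.pi/n)) with hy
    have hyb : |y| ≤ M := hbd _
    set e : ℝ := (-1:ℝ)^k with he
    have hee : e * e = 1 := by
      rw [he, ← pow_add]
      exact Even.neg_one_pow ⟨k, by ring⟩
    have hpow : ((-1:ℝ))^(k+1) = e * (-1) := by rw [he, pow_succ]
    rw [hpow]
    have hid : e * (y - A * (e * (-1))) = e * y + A * (e*e) := by ring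
    rw [hid, hee]
    have h1 : -M ≤ e * y := by
      have h2 : |e * y| = |y| := by
        rw [abs_mul, he, abs_pow, abs_neg, abs_one, one_pow, one_mul]
      have h3 : -(|e * y|) ≤ e * y := neg_abs_le _
      rw [h2] at h3
      linarith
    linarith
  -- geometry
  have hbθ : a < θs := by rw [hadef]; linarith
  have hθφ : θs < θs + φ := by linarith
  have hord : θs + φ < a + Real.pi/n := by
    have h34 : Real.pi/(4*(n:ℝ)) + Real.pi/(2*n) < Real.pi/n := by
      rw [div_add_div _ _ (by positivity) (by positivity), div_lt_div_iff₀ (by positivity) (by positivity)]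
      nlinarith [mul_pos hπ (mul_pos hnR hnR)]
    have : η + φ < Real.pi/n := by linarith
    rw [hadef]; linarith
  -- u values at special points
  have hts : t θs = M := hmax
  have hu_s : 0 < u θs := by
    have harg : (n:ℝ) * (θs - a) = (n:ℝ)*η := by rw [hadef]; ring
    simp only [hu]
    rw [harg, hts, ← hc0def]
    linarith
  have hu_f : u (θs + φ) < 0 := by
    have harg : (n:ℝ) * ((θs + φ) - a) = (n:ℝ)*η + (n:ℝ)*φ := by rw [hadef]; ring
    simp only [hu]
    rw [harg, ← ht0]
    have hlip := cosLip ((n:ℝ)*η + (n:ℝ)*φ) ((n:ℝ)*φ)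
    have habs : |(n:ℝ)*η + (n:ℝ)*φ - (n:ℝ)*φ| = (n:ℝ)*η := by
      rw [show (n:ℝ)*η + (n:ℝ)*φ - (n:ℝ)*φ = (n:ℝ)*η by ring]
      exact abs_of_pos hnη0
    rw [habs] at hlip
    have hcos_lb : Real.cos ((n:ℝ)*φ) - (n:ℝ)*η ≤ Real.cos ((n:ℝ)*η + (n:ℝ)*φ) := by
      have := abs_sub_abs_le_abs_sub (Real.cos ((n:ℝ)*η + (n:ℝ)*φ)) (Real.cos ((n:ℝ)*φ))
      have h5 := neg_abs_le (Real.cos ((n:ℝ)*η + (n:ℝ)*φ) - Real.cos ((n:ℝ)*φ))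
      linarith
    have hfin : t0 < A * Real.cos ((n:ℝ)*η + (n:ℝ)*φ) := by
      have hAcos : A * (Real.cos ((n:ℝ)*φ) - (n:ℝ)*η) ≤ A * Real.cos ((n:ℝ)*η + (n:ℝ)*φ) := by
        apply mul_le_mul_of_nonneg_left hcos_lb (by linarith)
      have hMA : M * Real.cos ((n:ℝ)*φ) ≤ A * Real.cos ((n:ℝ)*φ) :=
        mul_le_mul_of_nonneg_right (le_of_lt hA1) hcosφ
      nlinarith
    linarith
  have hu_a : u a < 0 := by
    have harg : (n:ℝ) * (a - a) = 0 := by ring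
    simp only [hu]
    rw [harg, Real.cos_zero]
    have := hbd a
    have h6 : t a ≤ M := le_of_abs_le (hbd a)
    simp only [ht] at h6 ⊢
    linarith
  have hu_b : 0 < u (a + Real.pi/n) := by
    have hpt : a + Real.pi/n = a + ((1:ℕ):ℝ)*(Real.pi/n) := by push_cast; ring
    rw [hpt, hak 1]
    have h6 : -M ≤ t (a + ((1:ℕ):ℝ)*(Real.pi/n)) := neg_le_of_abs_le (hbd _)
    simp only [pow_one]
    linarith
  -- three zeros via IVT
  obtain ⟨z0, hz0mem, hz0val⟩ := intermediate_value_Ioo (le_of_lt hbθ)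
    hucont.continuousOn (⟨hu_a, hu_s⟩ : (0:ℝ) ∈ Set.Ioo (u a) (u θs))
  obtain ⟨z1, hz1mem, hz1val⟩ := intermediate_value_Ioo' (le_of_lt hθφ)
    hucont.continuousOn (⟨hu_f, hu_s⟩ : (0:ℝ) ∈ Set.Ioo (u (θs+φ)) (u θs))
  obtain ⟨z2, hz2mem, hz2val⟩ := intermediate_value_Ioo (le_of_lt hord)
    hucont.continuousOn (⟨hu_f, hu_b⟩ : (0:ℝ) ∈ Set.Ioo (u (θs+φ)) (u (a + Real.pi/n)))
  -- chain of zeros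
  obtain ⟨L, hL1, hL2, hL3⟩ := existsChain (2*n-1) u hucont (a + Real.pi/n) (Real.pi/n)
    (by positivity) hsgn
  -- the complex polynomial
  obtain ⟨P, hPdeg, hPev⟩ := existsP p n hdeg A a
  have hP0 : P ≠ 0 := by
    intro h0
    have h7 := hPev a
    rw [h0] at h7
    simp only [Polynomial.eval_zero] at h7
    have h8 : ((p.eval (Real.cos a) : ℝ):ℂ) - ((A * Real.cos ((n:ℝ)*(a - a)) : ℝ):ℂ) = 0 := by
      rcases mul_eq_zero.mp h7.symm with h9 | h9
      · exact absurd h9 (pow_ne_zero _ (Complex.exp_ne_zero _))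
      · exact h9
    rw [← Complex.ofReal_sub] at h8
    have h9 : p.eval (Real.cos a) - A * Real.cos ((n:ℝ)*(a - a)) = 0 := by exact_mod_cast h8
    rw [show (n:ℝ)*(a-a) = 0 by ring, Real.cos_zero, mul_one] at h9
    have h10 : p.eval (Real.cos a) ≤ M := le_of_abs_le (hbd a)
    linarith
  -- assemble list
  set LL : List ℝ := z0 :: z1 :: z2 :: L with hLL
  have hNcast : ((2*n-1 : ℕ):ℝ) = 2*(n:ℝ) - 1 := by
    push_cast [Nat.cast_sub (by omega : 1 ≤ 2*n)]
    ring
  have hLtop : (a + Real.pi/n) + ((2*n-1:ℕ):ℝ)*(Real.pi/n) = a + 2*Real.pi := by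
    rw [hNcast]
    field_simp
    ring
  have hmemLL : ∀ x ∈ LL, a < x ∧ x < a + 2*Real.pi := by
    intro x hx
    have hπn : Real.pi/(n:ℝ) ≤ Real.pi := by
      apply div_le_self (le_of_lt hπ)
      exact_mod_cast hn
    rcases List.mem_cons.mp hx with rfl | hx
    · exact ⟨hz0mem.1, by linarith [hz0mem.2, hθφ, hord, hπn, hπ]⟩
    · rcases List.mem_cons.mp hx with rfl | hx
      · constructor
        · linarith [hz1mem.1]
        · linarith [hz1mem.2, hord, hπn, hπ]
      · rcases List.mem_cons.mp hx with rfl | hx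
        · constructor
          · linarith [hz2mem.1]
          · linarith [hz2mem.2, hπn, hπ]
        · obtain ⟨_, hlb, hub⟩ := hL3 x hx
          rw [hLtop] at hub
          constructor
          · have : 0 < Real.pi/(n:ℝ) := by positivity
            linarith
          · exact hub
  have hchainLL : LL.Chain' (· < ·) := by
    rw [hLL]
    refine List.isChain_cons.mpr ⟨?_, List.isChain_cons.mpr ⟨?_, List.isChain_cons.mpr ⟨?_, hL2⟩⟩⟩
    · intro y hy
      simp only [List.head?_cons, Option.mem_def, Option.some.injEq] at hy
      subst hy
      linarith [hz0mem.2, hz1mem.1]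
    · intro y hy
      simp only [List.head?_cons, Option.mem_def, Option.some.injEq] at hy
      subst hy
      linarith [hz1mem.2, hz2mem.1]
    · intro y hy
      have := (hL3 y (List.mem_of_mem_head? hy)).2.1
      linarith [hz2mem.2]
  have hspanLL : ∀ x ∈ LL, ∀ y ∈ LL, |x - y| < 2*Real.pi := by
    intro x hx y hy
    obtain ⟨hx1, hx2⟩ := hmemLL x hx
    obtain ⟨hy1, hy2⟩ := hmemLL y hy
    rw [abs_sub_lt_iff]
    constructor <;> linarith
  have hrootLL : ∀ x ∈ LL, P.eval (Complex.exp (x * Complex.I)) = 0 := by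
    intro x hx
    have hux : u x = 0 := by
      rcases List.mem_cons.mp hx with rfl | hx
      · exact hz0val
      · rcases List.mem_cons.mp hx with rfl | hx
        · exact hz1val
        · rcases List.mem_cons.mp hx with rfl | hx
          · exact hz2val
          · exact (hL3 x hx).1
    rw [hPev x]
    have h11 : ((p.eval (Real.cos x) : ℝ):ℂ) - ((A * Real.cos ((n:ℝ)*(x - a)) : ℝ):ℂ) = 0 := by
      rw [← Complex.ofReal_sub]
      simp only [hu, ht] at hux
      exact_mod_cast congrArg (Complex.ofReal) hux
    rw [h11, mul_zero]
  have hlenLL : P.natDegree + 1 ≤ LL.length := by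
    rw [hLL]
    simp only [List.length_cons, hL1]
    omega
  exact noChain P hP0 LL hchainLL hspanLL hrootLL hlenLL

/-- Chebyshev–Lobatto points form a norming set: for `r < m` and any real polynomial
`p` of degree at most `r`,
`sup_{[−1,1]} |p| ≤ (1 / cos(πr/(2m))) · max_{0 ≤ i ≤ m} |p(cos(iπ/m))|`. -/
theorem chebyshev_lobatto_norming (m r : ℕ) (hrm : r < m) (p : Polynomial ℝ)
    (hdeg : p.natDegree ≤ r) :
    ∀ x ∈ Icc (-1 : ℝ) 1,
      |p.eval x| ≤
        (1 / Real.cos (Real.pi * r / (2 * m))) *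
          (Finset.range (m + 1)).sup' ⟨0, by simp⟩
            (fun i => |p.eval (Real.cos (i * Real.pi / m))|) := by
  intro x hx
  have hπ := Real.pi_pos
  have hm0 : 0 < m := lt_of_le_of_lt (Nat.zero_le r) hrm
  have hmR : (0:ℝ) < m := by exact_mod_cast hm0
  set V : ℝ := (Finset.range (m + 1)).sup' ⟨0, by simp⟩
      (fun i => |p.eval (Real.cos (i * Real.pi / m))|) with hV
  have hV0 : 0 ≤ V := by
    rw [hV]
    exact le_trans (abs_nonneg _)
      (Finset.le_sup' (fun i : ℕ => |p.eval (Real.cos (i * Real.pi / m))|)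
        (Finset.mem_range.mpr (by omega : 0 < m + 1)))
  set c : ℝ := Real.cos (Real.pi * r / (2 * m)) with hc
  have hargc : 0 ≤ Real.pi * r / (2 * m) := by positivity
  have hargc2 : Real.pi * r / (2 * m) < Real.pi / 2 := by
    rw [div_lt_div_iff₀ (by positivity) (by norm_num)]
    have : (r:ℝ) < (m:ℝ) := by exact_mod_cast hrm
    nlinarith
  have hc0 : 0 < c := by
    apply Real.cos_pos_of_mem_Ioo
    constructor
    · linarith
    · exact hargc2
  suffices hsuf : |p.eval x| * c ≤ V by
    rw [one_div]
    have h := (le_div_iff₀ hc0).mpr hsuf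
    rw [div_eq_mul_inv] at h
    rw [show c⁻¹ * V = V * c⁻¹ from mul_comm _ _]
    exact h
  rcases Nat.eq_zero_or_pos r with hr0 | hr1
  · subst hr0
    have hpc : p = C (p.coeff 0) := Polynomial.eq_C_of_natDegree_le_zero hdeg
    have hval : ∀ y : ℝ, p.eval y = p.coeff 0 := by
      intro y; rw [hpc]; simp
    have hcc : c = 1 := by rw [hc]; norm_num
    rw [hcc, mul_one, hval]
    rw [hV]
    have h2 := Finset.le_sup' (fun i : ℕ => |p.eval (Real.cos (i * Real.pi / m))|)
      (Finset.mem_range.mpr (by omega : 0 < m + 1))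
    calc |p.coeff 0| = |p.eval (Real.cos ((0:ℕ) * Real.pi / m))| := by rw [hval]
      _ ≤ _ := h2
  · have hcont : ContinuousOn (fun y => |p.eval y|) (Icc (-1:ℝ) 1) :=
      ((Polynomial.continuous p).abs).continuousOn
    obtain ⟨xh, hxh, hxhmax⟩ := isCompact_Icc.exists_isMaxOn
      (Set.nonempty_Icc.mpr (by norm_num)) hcont
    set S : ℝ := |p.eval xh| with hS
    have hSmax : ∀ y ∈ Icc (-1:ℝ) 1, |p.eval y| ≤ S := fun y hy => hxhmax hy
    rcases eq_or_lt_of_le (abs_nonneg (p.eval xh)) with hS0 | hSpos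
    · have h1 : |p.eval x| ≤ S := hSmax x hx
      rw [hS, ← hS0] at h1
      have h2 : |p.eval x| = 0 := le_antisymm h1 (abs_nonneg _)
      rw [h2, zero_mul]
      exact hV0
    · set q : Polynomial ℝ := if 0 ≤ p.eval xh then p else -p with hq
      have hqdeg : q.natDegree ≤ r := by
        rw [hq]; split_ifs
        · exact hdeg
        · rwa [Polynomial.natDegree_neg]
      have hqabs : ∀ y : ℝ, |q.eval y| = |p.eval y| := by
        intro y; rw [hq]; split_ifs
        · rfl
        · rw [Polynomial.eval_neg, abs_neg]
      have hqx : q.eval xh = S := by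
        rw [hq, hS]
        split_ifs with h
        · exact (abs_of_nonneg h).symm
        · rw [Polynomial.eval_neg, abs_of_neg (lt_of_not_ge h)]
      have hqbd : ∀ θ : ℝ, |q.eval (Real.cos θ)| ≤ S := by
        intro θ
        rw [hqabs]
        exact hSmax _ ⟨Real.neg_one_le_cos θ, Real.cos_le_one θ⟩
      set θh : ℝ := Real.arccos xh with hθh
      have hcosθh : Real.cos θh = xh := Real.cos_arccos hxh.1 hxh.2
      have hθh0 : 0 ≤ θh := Real.arccos_nonneg xh
      have hθhπ : θh ≤ Real.pi := Real.arccos_le_pi xh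
      set y : ℝ := θh * m / Real.pi with hy
      have hy0 : 0 ≤ y := by positivity
      have hym : y ≤ m := by
        rw [hy, div_le_iff₀ hπ]
        nlinarith
      set i : ℕ := ⌊y + 1/2⌋₊ with hi
      have hile : (i:ℝ) ≤ y + 1/2 := Nat.floor_le (by linarith)
      have higt : y + 1/2 < (i:ℝ) + 1 := Nat.lt_floor_add_one _
      have him : i ≤ m := by
        by_contra hgt
        push_neg at hgt
        have : (m:ℝ) + 1 ≤ (i:ℝ) := by exact_mod_cast hgt
        linarith
      set δ : ℝ := (i:ℝ) * Real.pi / m - θh with hδ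
      have hδeq : δ = ((i:ℝ) - y) * (Real.pi/m) := by
        rw [hδ, hy]; field_simp
      have hπm : 0 < Real.pi / m := by positivity
      have hδbound : |δ| ≤ Real.pi / (2 * m) := by
        rw [hδeq, abs_mul, abs_of_pos hπm]
        have habs : |(i:ℝ) - y| ≤ 1/2 := abs_le.mpr ⟨by linarith, by linarith⟩
        have := mul_le_mul_of_nonneg_right habs (le_of_lt hπm)
        calc |(i:ℝ) - y| * (Real.pi/m) ≤ (1/2) * (Real.pi/m) := this
          _ = Real.pi / (2*m) := by ring
      have hφle : |δ| ≤ Real.pi / (2 * r) := by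
        have h3 : Real.pi / (2*(m:ℝ)) ≤ Real.pi / (2*r) := by
          rw [div_le_div_iff₀ (by positivity) (by positivity)]
          have h4 : (r:ℝ) ≤ (m:ℝ) := by exact_mod_cast le_of_lt hrm
          nlinarith
        linarith
      -- apply key lemma
      have hkey : S * Real.cos ((r:ℝ) * |δ|) ≤ q.eval (Real.cos ((i:ℝ) * Real.pi / m)) := by
        rcases le_or_gt 0 δ with hδ0 | hδ0
        · have := keyLemma q r hr1 hqdeg S hSpos hqbd θh (by rw [hcosθh]; exact hqx)
            δ hδ0 (by rw [abs_of_nonneg hδ0] at hφle; exact hφle)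
          rw [show θh + δ = (i:ℝ) * Real.pi / m by rw [hδ]; ring] at this
          rw [abs_of_nonneg hδ0]
          exact this
        · have hc2 : Real.cos (-θh) = xh := by rw [Real.cos_neg]; exact hcosθh
          have := keyLemma q r hr1 hqdeg S hSpos hqbd (-θh) (by rw [hc2]; exact hqx)
            (-δ) (by linarith) (by rw [abs_of_neg hδ0] at hφle; exact hφle)
          rw [show -θh + -δ = -((i:ℝ) * Real.pi / m) by rw [hδ]; ring, Real.cos_neg] at this
          rw [abs_of_neg hδ0]
          exact this
      have hrδ : (r:ℝ) * |δ| ≤ Real.pi * r / (2*m) := by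
        have := mul_le_mul_of_nonneg_left hδbound (by positivity : (0:ℝ) ≤ (r:ℝ))
        calc (r:ℝ) * |δ| ≤ (r:ℝ) * (Real.pi/(2*m)) := this
          _ = Real.pi * r / (2*m) := by ring
      have hcosmono : c ≤ Real.cos ((r:ℝ) * |δ|) := by
        rw [hc]
        apply Real.cos_le_cos_of_nonneg_of_le_pi (by positivity) (by linarith) hrδ
      have hnode : S * c ≤ |p.eval (Real.cos ((i:ℝ) * Real.pi / m))| := by
        have h5 : S * c ≤ S * Real.cos ((r:ℝ) * |δ|) :=
          mul_le_mul_of_nonneg_left hcosmono (le_of_lt hSpos)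
        have h6 : q.eval (Real.cos ((i:ℝ) * Real.pi / m))
            ≤ |q.eval (Real.cos ((i:ℝ) * Real.pi / m))| := le_abs_self _
        rw [hqabs] at h6
        linarith
      have hVi : |p.eval (Real.cos ((i:ℝ) * Real.pi / m))| ≤ V := by
        rw [hV]
        exact Finset.le_sup' (fun j : ℕ => |p.eval (Real.cos (j * Real.pi / m))|)
          (Finset.mem_range.mpr (by omega : i < m + 1))
      have h7 : |p.eval x| * c ≤ S * c :=
        mul_le_mul_of_nonneg_right (hSmax x hx) (le_of_lt hc0)
      linarith
end

section
/- Let V be an N-dimensional real inner product space continuously embedded in a normed space F with norm ‖·‖, and suppose the inner product on V has the form (u, v) = ∑_{i=1}^M w_i T_i(u) T_i(v), where w_i > 0 with ∑ w_i = 1 and each T_i is a linear functional on F with |T_i(f)| ≤ ‖f‖ for all f. Let P : F → V be the orthogonal projection in this inner product (defined on all of F via the bilinear extension). Then for any orthonormal basis {η₁,…,η_N} of V, the operator norm of P with respect to ‖·‖ satisfies ‖P‖ ≤ sup_{‖T‖≤1} (∑_{h=1}^N |T(η_h)|²)^{1/2}, where the sup is over linear functionals T on F of norm at most 1. -/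
/-!
The coefficients `c h = (f, η h)` of the projection obey Bessel's inequality for the discrete
semi-inner product, so `∑ c h ^ 2 ≤ ∑ wᵢ Tᵢ(f)² ≤ ‖f‖²`. On the other hand, norming `∑ c h • η h`
by a Hahn–Banach functional `g` of norm at most one and applying Cauchy–Schwarz gives
`‖∑ c h • η h‖ = ∑ c h g(η h) ≤ (∑ c h ^ 2)^{1/2} (∑ g(η h)²)^{1/2}`, and the last factor is at
most the supremum in the statement.
-/
open Finset

section DualBound

variable {F : Type*} [NormedAddCommGroup F] [NormedSpace ℝ F] {κ : Type*} [Fintype κ]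

noncomputable def dualL2Bound (η : κ → F) : ℝ :=
  sSup {r : ℝ | ∃ T' : F →L[ℝ] ℝ, ‖T'‖ ≤ 1 ∧ r = Real.sqrt (∑ h, (T' (η h)) ^ 2)}

lemma sqrt_sum_sq_le_dualL2Bound (η : κ → F) {g : F →L[ℝ] ℝ} (hg : ‖g‖ ≤ 1) :
    Real.sqrt (∑ h, (g (η h)) ^ 2) ≤ dualL2Bound η := by
  refine le_csSup ⟨Real.sqrt (∑ h, ‖η h‖ ^ 2), ?_⟩ ⟨g, hg, rfl⟩
  rintro r ⟨T', hT', rfl⟩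
  refine Real.sqrt_le_sqrt (sum_le_sum fun h _ => ?_)
  rw [sq_le_sq, abs_norm, ← Real.norm_eq_abs]
  exact (T'.le_opNorm _).trans (mul_le_of_le_one_left (norm_nonneg _) hT')

lemma dualL2Bound_nonneg (η : κ → F) : 0 ≤ dualL2Bound η :=
  (Real.sqrt_nonneg _).trans (sqrt_sum_sq_le_dualL2Bound η (g := 0) (by simp))

lemma norm_sum_smul_le_dualL2Bound (η : κ → F) (c : κ → ℝ) :
    ‖∑ h, c h • η h‖ ≤ dualL2Bound η * Real.sqrt (∑ h, c h ^ 2) := by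
  obtain ⟨g, hg, hgx⟩ := exists_dual_vector'' ℝ (∑ h, c h • η h)
  calc ‖∑ h, c h • η h‖ = ∑ h, c h * g (η h) := by simpa using hgx.symm
    _ ≤ Real.sqrt (∑ h, c h ^ 2) * Real.sqrt (∑ h, g (η h) ^ 2) :=
        Real.sum_mul_le_sqrt_mul_sqrt _ _ _
    _ ≤ dualL2Bound η * Real.sqrt (∑ h, c h ^ 2) := by
        rw [mul_comm]; gcongr; exact sqrt_sum_sq_le_dualL2Bound η hg

end DualBound

section Sampling

variable {F : Type*} {ι : Type*} [Fintype ι]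

noncomputable def weightedSample (w : ι → ℝ) (T : ι → F → ℝ) (f : F) : EuclideanSpace ℝ ι :=
  WithLp.toLp 2 fun i => Real.sqrt (w i) * T i f

variable {w : ι → ℝ} {T : ι → F → ℝ}

lemma inner_weightedSample (hw : ∀ i, 0 ≤ w i) (u v : F) :
    inner ℝ (weightedSample w T u) (weightedSample w T v) = ∑ i, w i * T i u * T i v := by
  simp only [weightedSample, PiLp.inner_apply, RCLike.inner_apply, conj_trivial]
  refine sum_congr rfl fun i _ => ?_
  linear_combination (T i u * T i v) * Real.mul_self_sqrt (hw i)

lemma norm_weightedSample_sq (hw : ∀ i, 0 ≤ w i) (f : F) :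
    ‖weightedSample w T f‖ ^ 2 = ∑ i, w i * T i f ^ 2 := by
  rw [← real_inner_self_eq_norm_sq, inner_weightedSample hw]
  simp only [mul_assoc, sq]

end Sampling

section WeightedSums

variable {F : Type*} {ι κ : Type*} [Fintype ι] [Fintype κ] {w : ι → ℝ} {T : ι → F → ℝ}

lemma sum_mul_sq_le_norm_sq [Norm F] (hT : ∀ i f, |T i f| ≤ ‖f‖) (hw : ∀ i, 0 ≤ w i)
    (hw1 : ∑ i, w i ≤ 1) (f : F) : ∑ i, w i * T i f ^ 2 ≤ ‖f‖ ^ 2 :=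
  calc ∑ i, w i * T i f ^ 2 ≤ ∑ i, w i * ‖f‖ ^ 2 :=
        sum_le_sum fun i _ => mul_le_mul_of_nonneg_left
          ((sq_abs _).symm.trans_le (pow_le_pow_left₀ (abs_nonneg _) (hT i f) 2)) (hw i)
    _ = (∑ i, w i) * ‖f‖ ^ 2 := (sum_mul ..).symm
    _ ≤ ‖f‖ ^ 2 := mul_le_of_le_one_left (sq_nonneg _) hw1

/-- Bessel's inequality, transported from `EuclideanSpace ℝ ι` along `weightedSample`. -/
lemma sum_sq_weightedInner_le [DecidableEq κ] (hw : ∀ i, 0 ≤ w i) {η : κ → F}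
    (hON : ∀ a b, ∑ i, w i * T i (η a) * T i (η b) = if a = b then 1 else 0) (f : F) :
    ∑ h, (∑ i, w i * T i f * T i (η h)) ^ 2 ≤ ∑ i, w i * T i f ^ 2 := by
  have hv : Orthonormal ℝ (weightedSample w T ∘ η) := by
    rw [orthonormal_iff_ite]
    intro a b
    simpa only [Function.comp, inner_weightedSample hw] using hON a b
  simpa only [Function.comp, real_inner_comm (weightedSample w T f), inner_weightedSample hw,
    Real.norm_eq_abs, sq_abs, norm_weightedSample_sq hw]
    using hv.sum_inner_products_le (weightedSample w T f) (s := univ)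

end WeightedSums

theorem least_squares_norm_le_M2_general
    {F : Type*} [NormedAddCommGroup F] [NormedSpace ℝ F] (N M : ℕ)
    (T : Fin M → F →ₗ[ℝ] ℝ) (hT : ∀ i (f : F), |T i f| ≤ ‖f‖)
    (w : Fin M → ℝ) (hw : ∀ i, 0 < w i) (hw1 : ∑ i, w i = 1)
    (η : Fin N → F)
    (hON : ∀ a b : Fin N,
      (∑ i, w i * T i (η a) * T i (η b)) = if a = b then 1 else 0) :
    ∀ f : F,
      ‖∑ h, (∑ i, w i * T i f * T i (η h)) • η h‖ ≤
        sSup {r : ℝ | ∃ T' : F →L[ℝ] ℝ, ‖T'‖ ≤ 1 ∧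
            r = Real.sqrt (∑ h, (T' (η h)) ^ 2)} * ‖f‖ := by
  intro f
  have hw0 : ∀ i, 0 ≤ w i := fun i => (hw i).le
  have hcoeff : ∑ h, (∑ i, w i * T i f * T i (η h)) ^ 2 ≤ ‖f‖ ^ 2 :=
    (sum_sq_weightedInner_le (T := fun i => T i) hw0 hON f).trans
      (sum_mul_sq_le_norm_sq (T := fun i => T i) hT hw0 hw1.le f)
  calc _ ≤ dualL2Bound η * Real.sqrt (∑ h, (∑ i, w i * T i f * T i (η h)) ^ 2) :=
        norm_sum_smul_le_dualL2Bound η _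
    _ ≤ dualL2Bound η * ‖f‖ := by
        gcongr
        · exact dualL2Bound_nonneg η
        · exact (Real.sqrt_le_left (norm_nonneg f)).mpr hcoeff

/-- `ℓ²`-type estimate of the norm of a discrete least squares projector.
Let `V ⊆ F` be an `N`-dimensional subspace of a normed space carrying the discrete
inner product `(u,v) = ∑ᵢ wᵢ Tᵢ(u) Tᵢ(v)` with positive normalized weights
(`∑ wᵢ = 1`) and sampling functionals `|Tᵢ(f)| ≤ ‖f‖`. If `η₁,…,η_N` is a basis
of `V` orthonormal with respect to this inner product, the orthogonal projection
`P f = ∑_h (f, η_h) η_h` satisfies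
`‖P f‖ ≤ (sup_{‖T‖ ≤ 1} √(∑_h T(η_h)²)) ‖f‖` for every `f ∈ F`. -/
theorem least_squares_norm_le_M2
    {F : Type*} [NormedAddCommGroup F] [NormedSpace ℝ F] (N M : ℕ)
    (V : Submodule ℝ F) (hdim : Module.finrank ℝ V = N)
    (T : Fin M → F →ₗ[ℝ] ℝ) (hT : ∀ i (f : F), |T i f| ≤ ‖f‖)
    (w : Fin M → ℝ) (hw : ∀ i, 0 < w i) (hw1 : ∑ i, w i = 1)
    (η : Fin N → F) (hηV : ∀ h, η h ∈ V)
    (hspan : Submodule.span ℝ (Set.range η) = V)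
    (hON : ∀ a b : Fin N,
      (∑ i, w i * T i (η a) * T i (η b)) = if a = b then 1 else 0) :
    ∀ f : F,
      ‖∑ h, (∑ i, w i * T i f * T i (η h)) • η h‖ ≤
        sSup {r : ℝ | ∃ T' : F →L[ℝ] ℝ, ‖T'‖ ≤ 1 ∧
            r = Real.sqrt (∑ h, (T' (η h)) ^ 2)} * ‖f‖ :=
  least_squares_norm_le_M2_general N M T hT w hw hw1 η hON
end

section
/- Let E ⊂ ℝⁿ be compact, V_r an increasing sequence of finite-dimensional subspaces of a normed space of functions/forms on E with norms ‖·‖₀, and for each r let T^(r) = {T₁,…,T_{M(r)}} be a finite set of norm-one linear functionals satisfying the sampling inequality ‖ω‖₀ ≤ C max_i |T_i(ω)| for all ω ∈ V_r (an admissible mesh of constant C). Let F^(r) ⊂ T^(r) with |F^(r)| = N(r) = dim V_r be a subset maximizing the absolute Vandermonde determinant |det (T_i(b_j))| over all N(r)-subsets of T^(r), for some basis {b_j} of V_r, and assume this maximum is nonzero. Then the Lagrange basis {ω₁,…,ω_{N(r)}} associated with F^(r) satisfies ‖ω_i‖₀ ≤ C for each i, and consequently sup_{‖T‖≤1} ∑_{i=1}^{N(r)}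 |T(ω_i)| ≤ C · N(r). -/
open Finset Matrix

/-- Fekete systems extracted from an admissible mesh have uniformly bounded Lagrange
basis, hence Lebesgue constant at most `C·N`.  Here `T₁,…,T_M` is a mesh of norm-one
functionals satisfying the sampling inequality `‖ω‖ ≤ C·maxᵢ |Tᵢ(ω)|` on
`V = span{b₁,…,b_N}`, `s : Fin N ↪ Fin M` selects a subset maximizing the absolute
Vandermonde determinant (assumed nonzero), and `ω₁,…,ω_N` is the associated Lagrange
basis.  Then `‖ωᵢ‖ ≤ C` for each `i` and `sup_{‖T‖≤1} ∑ᵢ |T(ωᵢ)| ≤ C·N`. -/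
theorem fekete_from_mesh_lebesgue_bound
    {F : Type*} [NormedAddCommGroup F] [NormedSpace ℝ F] (N M : ℕ)
    (hne : (Finset.univ : Finset (Fin M)).Nonempty)
    (b : Fin N → F) (C : ℝ)
    (T : Fin M → F →L[ℝ] ℝ) (hTnorm : ∀ i, ‖T i‖ = 1)
    (hsampling : ∀ v ∈ Submodule.span ℝ (Set.range b),
      ‖v‖ ≤ C * Finset.univ.sup' hne fun i => |T i v|)
    (s : Fin N ↪ Fin M)
    (hmax : ∀ s' : Fin N ↪ Fin M,
      |(Matrix.of fun i j => T (s' i) (b j)).det| ≤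
        |(Matrix.of fun i j => T (s i) (b j)).det|)
    (hnz : (Matrix.of fun i j => T (s i) (b j)).det ≠ 0)
    (ω : Fin N → F) (hωV : ∀ j, ω j ∈ Submodule.span ℝ (Set.range b))
    (hLag : ∀ i j, T (s i) (ω j) = if i = j then 1 else 0) :
    (∀ i, ‖ω i‖ ≤ C) ∧
    (∀ T' : F →L[ℝ] ℝ, ‖T'‖ ≤ 1 → ∑ i, |T' (ω i)| ≤ C * N) := by
  set A : Matrix (Fin N) (Fin N) ℝ := Matrix.of fun i j => T (s i) (b j) with hAdef
  -- Key: every mesh functional evaluates the Lagrange basis with absolute value ≤ 1.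
  have hbound : ∀ (i : Fin N) (k : Fin M), |T k (ω i)| ≤ 1 := by
    intro i k
    set v : Fin N → ℝ := fun l => T k (b l) with hvdef
    obtain ⟨c, hc⟩ := (Submodule.mem_span_range_iff_exists_fun ℝ).mp (hωV i)
    have hAc : A *ᵥ c = Pi.single i 1 := by
      ext p
      have h1 : T (s p) (ω i) = ∑ l, c l * T (s p) (b l) := by
        rw [← hc, map_sum]
        simp [mul_comm]
      have h2 := hLag p i
      simp only [Matrix.mulVec, dotProduct, Pi.single_apply]
      rw [h2] at h1
      simp only [hAdef, Matrix.of_apply]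
      rw [h1]
      exact Finset.sum_congr rfl fun l _ => mul_comm _ _
    have hTk : T k (ω i) = ∑ l, c l * v l := by
      rw [← hc, map_sum]
      simp [hvdef, mul_comm]
    -- adjugate column = det • coordinates
    have hadj : ∀ l, A.adjugate l i = A.det * c l := by
      have h := congrArg (fun w => A.adjugate *ᵥ w) hAc
      simp only [Matrix.mulVec_mulVec, Matrix.adjugate_mul] at h
      intro l
      have := congrFun h l
      simpa [Matrix.smul_mulVec, Matrix.one_mulVec] using this.symm
    -- determinant of the row-replaced matrix
    have key : (A.updateRow i v).det = T k (ω i) * A.det := by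
      rw [← Matrix.cramer_transpose_apply, Matrix.cramer_eq_adjugate_mulVec,
        ← Matrix.adjugate_transpose]
      simp only [Matrix.mulVec, dotProduct, Matrix.transpose_apply]
      rw [hTk, Finset.sum_mul]
      exact Finset.sum_congr rfl fun l _ => by rw [hadj l]; ring
    -- the replaced matrix has determinant bounded by |A.det|
    have hdetle : |(A.updateRow i v).det| ≤ |A.det| := by
      set f : Fin N → Fin M := fun p => if p = i then k else s p with hfdef
      have hrow : ∀ p l, (A.updateRow i v) p l = T (f p) (b l) := by
        intro p l
        by_cases hp : p = i <;>
          simp [hfdef, hp, Matrix.updateRow_apply, hvdef, hAdef]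
      by_cases hf : Function.Injective f
      · have h := hmax ⟨f, hf⟩
        have heq : (Matrix.of fun p l => T (f p) (b l)) = A.updateRow i v := by
          ext p l; rw [hrow p l]; rfl
        simp only [Function.Embedding.coeFn_mk] at h
        rwa [heq] at h
      · rw [Function.not_injective_iff] at hf
        obtain ⟨p, q, hpq, hne'⟩ := hf
        have : (A.updateRow i v).det = 0 := by
          apply Matrix.det_zero_of_row_eq hne'
          ext l
          rw [hrow p l, hrow q l, hpq]
        rw [this]
        simp [abs_nonneg]
    rw [key, abs_mul] at hdetle
    have hApos : 0 < |A.det| := abs_pos.mpr hnz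
    exact le_of_mul_le_mul_right (by rw [one_mul]; exact hdetle) hApos
  -- norms of Lagrange basis
  have hnorm : ∀ i, ‖ω i‖ ≤ C := by
    intro i
    have hsup_le : (Finset.univ.sup' hne fun k => |T k (ω i)|) ≤ 1 :=
      Finset.sup'_le _ _ fun k _ => hbound i k
    have hsup_ge : (1 : ℝ) ≤ Finset.univ.sup' hne fun k => |T k (ω i)| := by
      have := Finset.le_sup' (fun k => |T k (ω i)|) (Finset.mem_univ (s i))
      simp [hLag i i] at this; exact this
    have hωne : ω i ≠ 0 := by
      intro h
      have := hLag i i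
      simp [h] at this
    have h1 : ‖ω i‖ ≤ C * Finset.univ.sup' hne fun k => |T k (ω i)| :=
      hsampling (ω i) (hωV i)
    have hCpos : 0 < C := by
      by_contra hC
      push_neg at hC
      have hsup_pos : 0 < Finset.univ.sup' hne fun k => |T k (ω i)| :=
        lt_of_lt_of_le one_pos hsup_ge
      have : C * (Finset.univ.sup' hne fun k => |T k (ω i)|) ≤ 0 :=
        mul_nonpos_of_nonpos_of_nonneg hC hsup_pos.le
      have h2 : 0 < ‖ω i‖ := norm_pos_iff.mpr hωne
      linarith
    calc ‖ω i‖ ≤ C * Finset.univ.sup' hne fun k => |T k (ω i)| := h1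
      _ ≤ C * 1 := by
          exact mul_le_mul_of_nonneg_left hsup_le hCpos.le
      _ = C := mul_one C
  refine ⟨hnorm, fun T' hT' => ?_⟩
  calc ∑ i, |T' (ω i)| ≤ ∑ _i : Fin N, C := by
        apply Finset.sum_le_sum
        intro i _
        have h1 : |T' (ω i)| ≤ ‖T'‖ * ‖ω i‖ := by
          have := T'.le_opNorm (ω i)
          simpa [Real.norm_eq_abs] using this
        calc |T' (ω i)| ≤ ‖T'‖ * ‖ω i‖ := h1
          _ ≤ 1 * C := mul_le_mul hT' (hnorm i) (norm_nonneg _) zero_le_one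
          _ = C := one_mul C
    _ = C * N := by simp [mul_comm]
end
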